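/- Define det_qM(λ) = a(λ+η/2)d(λ−η/2), det_qK±(λ) = ±2(λ±η)(λ²/ζ̄±² − 1), and det_qU±(λ) = det_qM(λ)·det_qM(−λ)·det_qK±(λ). Then, for both choices of sign and for all λ ∈ ℂ with λ ≠ ±η/2, one has the identity det_qK±(λ)·det_qU∓(λ)/(η²−4λ²) = A_{ζ̄₊,ζ̄₋}(λ+η/2)·A_{ζ̄₊,ζ̄₋}(−λ+η/2). -/

import Mathlib

open Matrix Complex BigOperators Finset

noncomputable section

namespace XXXChain

def afun {N : ℕ} (η : ℂ) (ξ : Fin N → ℂ) (lam : ℂ) : ℂ := ∏ n, (lam - ξ n + η/2)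
def dfun {N : ℕ} (η : ℂ) (ξ : Fin N → ℂ) (lam : ℂ) : ℂ := ∏ n, (lam - ξ n - η/2)

/-- The function A_{ζ̄₊,ζ̄₋}(λ). -/
def Afun {N : ℕ} (η : ℂ) (ξ : Fin N → ℂ) (ζbp ζbm : ℂ) (lam : ℂ) : ℂ :=
  (-1)^N * ((2*lam + η)/(2*lam)) *
    ((lam - η/2 + ζbp) * (lam - η/2 + ζbm) / (ζbp * ζbm)) * afun η ξ lam * dfun η ξ (-lam)

/-- Bulk quantum determinant det_q M(λ) = a(λ+η/2) d(λ−η/2). -/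
def detqM {N : ℕ} (η : ℂ) (ξ : Fin N → ℂ) (lam : ℂ) : ℂ :=
  afun η ξ (lam + η/2) * dfun η ξ (lam - η/2)

/-- det_q K₊(λ) = 2(λ+η)(λ²/ζ̄₊² − 1). -/
def detqKp (η ζbp lam : ℂ) : ℂ := 2 * (lam + η) * (lam^2 / ζbp^2 - 1)

/-- det_q K₋(λ) = −2(λ−η)(λ²/ζ̄₋² − 1). -/
def detqKm (η ζbm lam : ℂ) : ℂ := -(2 * (lam - η) * (lam^2 / ζbm^2 - 1))

/-- det_q U₊(λ) = det_qM(λ) det_qM(−λ) det_qK₊(λ). -/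
def detqUp {N : ℕ} (η : ℂ) (ξ : Fin N → ℂ) (ζbp lam : ℂ) : ℂ :=
  detqM η ξ lam * detqM η ξ (-lam) * detqKp η ζbp lam

/-- det_q U₋(λ) = det_qM(λ) det_qM(−λ) det_qK₋(λ). -/
def detqUm {N : ℕ} (η : ℂ) (ξ : Fin N → ℂ) (ζbm lam : ℂ) : ℂ :=
  detqM η ξ lam * detqM η ξ (-lam) * detqKm η ζbm lam

theorem sq_div_sq_sub_one {K : Type*} [Field K] {ζ : K} (hζ : ζ ≠ 0) (x : K) :
    x ^ 2 / ζ ^ 2 - 1 = -((x + ζ) * (-x + ζ) / ζ ^ 2) := by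
  field_simp
  ring

/-- The shifts by `η/2` turn the poles `2μ = 0` of the two factors into the zeros of
`η² − 4λ²`, and their `a·d` factors into `detqM λ · detqM (−λ)`. -/
theorem Afun_add_half_mul_Afun_neg_add_half {N : ℕ} (η : ℂ) (ξ : Fin N → ℂ) {ζbp ζbm : ℂ}
    (hζbp : ζbp ≠ 0) (hζbm : ζbm ≠ 0) (lam : ℂ) :
    Afun η ξ ζbp ζbm (lam + η/2) * Afun η ξ ζbp ζbm (-lam + η/2) =
      detqKp η ζbp lam * detqKm η ζbm lam * (detqM η ξ lam * detqM η ξ (-lam)) /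
        (η^2 - 4*lam^2) := by
  have hsign : (-1 : ℂ) ^ N * (-1) ^ N = 1 := by rw [← mul_pow, neg_one_mul, neg_neg, one_pow]
  have hd₁ : -(lam + η/2) = -lam - η/2 := by ring
  have hd₂ : -(-lam + η/2) = lam - η/2 := by ring
  have hden : (η^2 - 4*lam^2)⁻¹ = (2 * (lam + η/2))⁻¹ * (2 * (-lam + η/2))⁻¹ := by
    rw [← mul_inv]
    ring
  calc _ = (-1 : ℂ) ^ N * (-1) ^ N * (detqKp η ζbp lam * detqKm η ζbm lam *
          (detqM η ξ lam * detqM η ξ (-lam)) / (η^2 - 4*lam^2)) := by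
        unfold Afun detqM detqKp detqKm
        rw [sq_div_sq_sub_one hζbp, sq_div_sq_sub_one hζbm, hd₁, hd₂,
          div_eq_mul_inv _ (η^2 - 4*lam^2), hden]
        ring
    _ = _ := by rw [hsign, one_mul]

theorem quantum_determinant_identity_general (N : ℕ) (η : ℂ)
    (ξ : Fin N → ℂ) (ζbp ζbm : ℂ) (hζbp : ζbp ≠ 0) (hζbm : ζbm ≠ 0)
    (lam : ℂ) :
    detqKp η ζbp lam * detqUm η ξ ζbm lam / (η^2 - 4*lam^2) =
      Afun η ξ ζbp ζbm (lam + η/2) * Afun η ξ ζbp ζbm (-lam + η/2) ∧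
    detqKm η ζbm lam * detqUp η ξ ζbp lam / (η^2 - 4*lam^2) =
      Afun η ξ ζbp ζbm (lam + η/2) * Afun η ξ ζbp ζbm (-lam + η/2) := by
  rw [Afun_add_half_mul_Afun_neg_add_half η ξ hζbp hζbm]
  unfold detqUm detqUp
  constructor <;> ring

/-- for both choices of sign and all λ ≠ ±η/2,
det_qK±(λ)·det_qU∓(λ)/(η²−4λ²) = A_{ζ̄₊,ζ̄₋}(λ+η/2)·A_{ζ̄₊,ζ̄₋}(−λ+η/2). -/
theorem quantum_determinant_identity (N : ℕ) (hN : 1 ≤ N) (η : ℂ) (hη : η ≠ 0)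
    (ξ : Fin N → ℂ) (ζbp ζbm : ℂ) (hζbp : ζbp ≠ 0) (hζbm : ζbm ≠ 0)
    (lam : ℂ) (h1 : lam ≠ η/2) (h2 : lam ≠ -(η/2)) :
    detqKp η ζbp lam * detqUm η ξ ζbm lam / (η^2 - 4*lam^2) =
      Afun η ξ ζbp ζbm (lam + η/2) * Afun η ξ ζbp ζbm (-lam + η/2) ∧
    detqKm η ζbm lam * detqUp η ξ ζbp lam / (η^2 - 4*lam^2) =
      Afun η ξ ζbp ζbm (lam + η/2) * Afun η ξ ζbp ζbm (-lam + η/2) :=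
  quantum_determinant_identity_general N η ξ ζbp ζbm hζbp hζbm lam

end XXXChain
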